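/- Let (H, Γ₁, Γ₂) be a boundary triplet for a closed densely defined symmetric operator T, and let K, K' be contractions on H. If the restrictions L_K and L_{K'} of T* to the domains {f : (K − I)Γ₁f + i(K + I)Γ₂f = 0} and {f : (K' − I)Γ₁f + i(K' + I)Γ₂f = 0} coincide (have the same domain), then K = K'. That is, the map K ↦ L_K is injective on contractions. -/
import Mathlib


open scoped InnerProductSpace

/-- Let `(Hb, Γ₁, Γ₂)` be a boundary triplet for a closed densely defined symmetric
operator `T` and let `K`, `K'` be contractions on `Hb`. If the restrictions `L_K` and
`L_{K'}` of `T*` to `{f : (K − I)Γ₁f + i(K + I)Γ₂f = 0}` and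
`{f : (K' − I)Γ₁f + i(K' + I)Γ₂f = 0}` have the same domain, then `K = K'`:
the map `K ↦ L_K` is injective on contractions. -/
theorem contraction_to_extension_injective
    {H : Type*} [NormedAddCommGroup H] [InnerProductSpace ℂ H] [CompleteSpace H]
    {Hb : Type*} [NormedAddCommGroup Hb] [InnerProductSpace ℂ Hb] [CompleteSpace Hb]
    (D Dstar : Submodule ℂ H) (hDD : D ≤ Dstar) (A : Dstar →ₗ[ℂ] H)
    (hdense : Dense (D : Set H))
    (hclosed : IsClosed {q : H × H | ∃ h : q.1 ∈ D, q.2 = A ⟨q.1, hDD h⟩})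
    (hsym : ∀ (f g : H) (hf : f ∈ D) (hg : g ∈ D),
      ⟪A ⟨f, hDD hf⟩, g⟫_ℂ = ⟪f, A ⟨g, hDD hg⟩⟫_ℂ)
    (hadjDom : ∀ g : H, g ∈ Dstar ↔
      ∃ h : H, ∀ (f : H) (hf : f ∈ D), ⟪A ⟨f, hDD hf⟩, g⟫_ℂ = ⟪f, h⟫_ℂ)
    (hadjVal : ∀ (g : H) (hg : g ∈ Dstar) (f : H) (hf : f ∈ D),
      ⟪A ⟨f, hDD hf⟩, g⟫_ℂ = ⟪f, A ⟨g, hg⟩⟫_ℂ)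
    (Γ1 Γ2 : Dstar →ₗ[ℂ] Hb)
    (hGreen : ∀ f g : Dstar,
      ⟪A f, (g : H)⟫_ℂ - ⟪(f : H), A g⟫_ℂ = ⟪Γ1 f, Γ2 g⟫_ℂ - ⟪Γ2 f, Γ1 g⟫_ℂ)
    (hSurj : ∀ g1 g2 : Hb, ∃ f : Dstar, Γ1 f = g1 ∧ Γ2 f = g2)
    (K K' : Hb →L[ℂ] Hb) (hK : ‖K‖ ≤ 1) (hK' : ‖K'‖ ≤ 1)
    (hsame : ∀ f : Dstar,
      (K - 1) (Γ1 f) + Complex.I • ((K + 1) (Γ2 f)) = 0 ↔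
      (K' - 1) (Γ1 f) + Complex.I • ((K' + 1) (Γ2 f)) = 0) :
    K = K' := by
  ext u
  set g1 : Hb := (2:ℂ)⁻¹ • (u + K u) with hg1
  set g2 : Hb := (-(Complex.I) * (2:ℂ)⁻¹) • (u - K u) with hg2
  have hcoef : Complex.I * (-(Complex.I) * (2:ℂ)⁻¹) = (2:ℂ)⁻¹ := by
    rw [show Complex.I * (-(Complex.I) * (2:ℂ)⁻¹)
        = -(Complex.I * Complex.I) * (2:ℂ)⁻¹ by ring, Complex.I_mul_I]
    ring
  have hsum : g1 + Complex.I • g2 = u := by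
    rw [hg1, hg2, smul_smul, hcoef, smul_add, smul_sub]
    module
  have hdiff : g1 - Complex.I • g2 = K u := by
    rw [hg1, hg2, smul_smul, hcoef, smul_add, smul_sub]
    module
  have key0 : ∀ (L : Hb →L[ℂ] Hb) (a b : Hb),
      (L - 1) a + Complex.I • ((L + 1) b)
        = L (a + Complex.I • b) - (a - Complex.I • b) := by
    intro L a b
    simp only [ContinuousLinearMap.sub_apply, ContinuousLinearMap.add_apply,
      ContinuousLinearMap.one_apply, map_add, map_smul, smul_add, smul_sub]
    abel
  obtain ⟨f, hf1, hf2⟩ := hSurj g1 g2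
  have key : (K - 1) (Γ1 f) + Complex.I • ((K + 1) (Γ2 f)) = 0 := by
    rw [hf1, hf2, key0, hsum, hdiff, sub_self]
  have h' := (hsame f).mp key
  rw [hf1, hf2, key0, hsum, hdiff] at h'
  exact (sub_eq_zero.mp h').symm
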